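/- arXiv:2110.03616 — 2 statements merged into one kernel-verified Lean document; each statement's English description precedes it below -/
import Mathlib

section
/- For every integer p ≥ 1 and all integers n ≥ k ≥ 0, the element C^{(p)}_{n,k} lies in the Laurent polynomial ring ℤ[q^{±1}, a^{±1}] and is divisible in that ring by {n}_k = {n}{n−1}⋯{n−k+1}; that is, C^{(p)}_{n,k} = {n}_k · P for some P ∈ ℤ[q^{±1}, a^{±1}]. -/
open Finset

noncomputable section

/-- The field ℚ(q,a) of rational functions in two indeterminates. -/
abbrev F : Type := FractionRing (MvPolynomial (Fin 2) ℚ)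

/-- The indeterminate q. -/
def qv : F := algebraMap (MvPolynomial (Fin 2) ℚ) F (MvPolynomial.X 0)

/-- The indeterminate a. -/
def av : F := algebraMap (MvPolynomial (Fin 2) ℚ) F (MvPolynomial.X 1)

/-- {n} = q^n - q^{-n}. -/
def qb (n : ℤ) : F := qv ^ n - qv ^ (-n)

/-- {n}_i = {n}{n-1}⋯{n-i+1}. -/
def fall (n : ℤ) (i : ℕ) : F := ∏ j ∈ range i, qb (n - j)

/-- {n}! = {n}_n. -/
def ffact (n : ℕ) : F := fall n n

/-- {n; a} = a q^n - a⁻¹ q^{-n}. -/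
def braA (n : ℤ) : F := av * qv ^ n - av⁻¹ * qv ^ (-n)

/-- {n; a}_i = {n;a}{n-1;a}⋯{n-i+1;a}. -/
def fallA (n : ℤ) (i : ℕ) : F := ∏ j ∈ range i, braA (n - j)

/-- α^i_{m,n} = (-a)^{-i} q^{-i(m+n)+i(i+3)/2} {m}_i {n}_i / {i}!. -/
def alpha (i : ℕ) (m n : ℤ) : F :=
  (-av) ^ (-(i : ℤ)) * qv ^ (-(i : ℤ) * (m + n) + ((i : ℤ) * ((i : ℤ) + 3)) / 2) *
    fall m i * fall n i / ffact i

/-- Partial sum s_i = l_1 + ⋯ + l_i of a multi-index. -/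
def psum {p : ℕ} (l : Fin p → ℕ) (i : ℕ) : ℕ :=
  ∑ j ∈ univ.filter (fun j : Fin p => (j : ℕ) < i), l j

/-- C^{(p)}_{n,k} = Σ_{l_1+⋯+l_p = k} (∏_{i=1}^{p-1} a^{-2 s_i} q^{2 s_i (s_i - 2n + 1)})
    ∏_{i=1}^{p} α^{l_i}_{n-s_{i-1}, n-s_{i-1}}. -/
def Cnk (p n k : ℕ) : F :=
  ∑ l ∈ Finset.Nat.antidiagonalTuple p k,
    (∏ i ∈ range (p - 1),
        av ^ (-(2 : ℤ) * (psum l (i + 1) : ℤ)) *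
          qv ^ ((2 : ℤ) * (psum l (i + 1) : ℤ) *
            ((psum l (i + 1) : ℤ) - 2 * (n : ℤ) + 1))) *
      ∏ i : Fin p,
        alpha (l i) ((n : ℤ) - (psum l (i : ℕ) : ℤ)) ((n : ℤ) - (psum l (i : ℕ) : ℤ))

/-- The Laurent polynomial ring ℤ[q^{±1}, a^{±1}] inside ℚ(q,a). -/
def LaurentZ : Subring F := Subring.closure {qv, av, qv⁻¹, av⁻¹}

/-- The entry l_{i+1} (0-indexed i) of a multi-index, or 0 if out of range. -/
def lget {p : ℕ} (l : Fin p → ℕ) (i : ℕ) : ℕ := if h : i < p then l ⟨i, h⟩ else 0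

/-- φ_k(l) = Σ_{i=1}^{p-1} 2 s_i (s_i - 2k + 1) + Σ_{i=1}^{p} l_i(l_i+3)/2
    + 2 Σ_{i=1}^{p-1} s_i l_{i+1}. -/
def phi (k : ℕ) {p : ℕ} (l : Fin p → ℕ) : ℤ :=
  (∑ i ∈ range (p - 1),
      2 * (psum l (i + 1) : ℤ) * ((psum l (i + 1) : ℤ) - 2 * (k : ℤ) + 1)) +
    (∑ i ∈ range p, ((lget l i : ℤ) * ((lget l i : ℤ) + 3)) / 2) +
    2 * ∑ i ∈ range (p - 1), (psum l (i + 1) : ℤ) * (lget l (i + 1) : ℤ)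

/-- [n] = {n}/{1}. -/
def qint (n : ℤ) : F := qb n / qb 1

/-- [n]! = [n][n-1]⋯[1]. -/
def qfact (n : ℕ) : F := ∏ i ∈ range n, qint ((i : ℤ) + 1)

/-- The q-multinomial coefficient [n choose l] = [n]!/([l_1]!⋯[l_p]!). -/
def qmultinomial {p : ℕ} (n : ℕ) (l : Fin p → ℕ) : F :=
  qfact n / ∏ i : Fin p, qfact (l i)

/-- The balanced Gaussian binomial coefficient [n choose i] = [n]!/([i]![n-i]!). -/
def qbinom (n i : ℕ) : F := qfact n / (qfact i * qfact (n - i))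

/-- C̃^{(p)}_{k,k} of formula (17). -/
def Ctilde (p k : ℕ) : F :=
  (-1) ^ k * av ^ (-(k : ℤ)) * qv ^ (-(2 : ℤ) * (k : ℤ) ^ 2) *
    ∑ l ∈ Finset.Nat.antidiagonalTuple p k,
      av ^ (-(2 : ℤ) *
          ∑ i ∈ range (p - 1), ((p : ℤ) - ((i : ℤ) + 1)) * (lget l i : ℤ)) *
        qv ^ phi k l * qmultinomial k l


/-!
Since `α^i_{m,m} = (unit) · {m}_i · ({m}_i / {i}!)` and the q-binomial `{m}_i / {i}!` is a
Laurent polynomial for every integer `m` (q-Pascal recursion in `m`, run in both directions),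
each summand of `C^{(p)}_{n,k}` is a Laurent multiple of `∏_i {n - s_{i-1}}_{l_i}`, and this
product telescopes to `{n}_{l_1 + ⋯ + l_p} = {n}_k`.
-/

lemma exists_mem_sum_eq_mul {R ι : Type*} [CommRing R] (S : Subring R) (s : Finset ι) (c : R)
    (f : ι → R) (h : ∀ i ∈ s, ∃ P ∈ S, f i = c * P) :
    ∃ P ∈ S, ∑ i ∈ s, f i = c * P := by
  choose! P hP hPe using h
  exact ⟨∑ i ∈ s, P i, sum_mem hP, by rw [mul_sum]; exact sum_congr rfl hPe⟩

lemma zpow_mem_of_inv_mem {K : Type*} [DivisionRing K] {S : Subring K} {x : K}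
    (hx : x ∈ S) (hx' : x⁻¹ ∈ S) (z : ℤ) : x ^ z ∈ S := by
  rcases z.eq_nat_or_neg with ⟨m, rfl | rfl⟩
  · rw [zpow_natCast]; exact pow_mem hx m
  · rw [zpow_neg, zpow_natCast, ← inv_pow]; exact pow_mem hx' m

namespace LaurentZ

lemma qv_zpow_mem (z : ℤ) : qv ^ z ∈ LaurentZ :=
  zpow_mem_of_inv_mem (Subring.subset_closure (by simp)) (Subring.subset_closure (by simp)) z

lemma av_zpow_mem (z : ℤ) : av ^ z ∈ LaurentZ :=
  zpow_mem_of_inv_mem (Subring.subset_closure (by simp)) (Subring.subset_closure (by simp)) z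

lemma neg_av_zpow_mem (z : ℤ) : (-av) ^ z ∈ LaurentZ := by
  refine zpow_mem_of_inv_mem (neg_mem (Subring.subset_closure (by simp))) ?_ z
  rw [inv_neg]
  exact neg_mem (Subring.subset_closure (by simp))

lemma qb_mem (z : ℤ) : qb z ∈ LaurentZ := sub_mem (qv_zpow_mem z) (qv_zpow_mem (-z))

lemma fall_mem (z : ℤ) (i : ℕ) : fall z i ∈ LaurentZ := prod_mem fun _ _ => qb_mem _

end LaurentZ

open LaurentZ

lemma qv_pow_ne_one {N : ℕ} (hN : N ≠ 0) : qv ^ N ≠ 1 := by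
  intro h
  have hX : (MvPolynomial.X 0 : MvPolynomial (Fin 2) ℚ) ^ N = 1 :=
    IsFractionRing.injective (MvPolynomial (Fin 2) ℚ) F (by simpa [qv] using h)
  have h2 := congrArg (MvPolynomial.eval fun _ => (2 : ℚ)) hX
  simp only [map_pow, MvPolynomial.eval_X, map_one] at h2
  exact (one_lt_pow₀ (by norm_num : (1 : ℚ) < 2) hN).ne' h2

lemma qv_ne_zero : qv ≠ 0 := by
  rw [qv, Ne, map_eq_zero_iff _ (IsFractionRing.injective _ _)]
  exact MvPolynomial.X_ne_zero 0

lemma qb_ne_zero {z : ℤ} (hz : 0 < z) : qb z ≠ 0 := by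
  lift z to ℕ using hz.le
  intro h
  have h2 : qv ^ (2 * z) = 1 := by
    have hpow : qv ^ (z : ℤ) = qv ^ (-(z : ℤ)) := sub_eq_zero.mp h
    rw [two_mul, pow_add, ← zpow_natCast]
    nth_rw 1 [hpow]
    rw [← zpow_add₀ qv_ne_zero, neg_add_cancel, zpow_zero]
  exact qv_pow_ne_one (by omega) h2

lemma ffact_ne_zero (i : ℕ) : ffact i ≠ 0 := by
  rw [ffact, fall]
  exact prod_ne_zero_iff.mpr fun j hj => qb_ne_zero (by simp at hj; omega)

lemma qb_add (a b : ℤ) : qb (a + b) = qv ^ a * qb b + qv ^ (-b) * qb a := by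
  simp only [qb, mul_sub, ← zpow_add₀ qv_ne_zero]
  ring_nf

lemma fall_add (z : ℤ) (a b : ℕ) : fall z (a + b) = fall z a * fall (z - a) b := by
  rw [fall, prod_range_add, fall, fall]
  congr 1
  exact prod_congr rfl fun t _ => by congr 1; push_cast; ring

lemma fall_succ (z : ℤ) (j : ℕ) : fall z (j + 1) = fall z j * qb (z - j) :=
  prod_range_succ _ _

lemma fall_succ' (z : ℤ) (j : ℕ) : fall z (j + 1) = qb z * fall (z - 1) j := by
  rw [add_comm, fall_add]
  simp [fall]

lemma fall_zero_succ (j : ℕ) : fall 0 (j + 1) = 0 := by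
  rw [fall_succ']
  simp [qb]

lemma ffact_succ (j : ℕ) : ffact (j + 1) = qb ((j : ℤ) + 1) * ffact j := by
  rw [ffact, fall_succ']
  simp [ffact]

lemma fall_div_ffact_pascal (m : ℤ) (j : ℕ) :
    fall (m + 1) (j + 1) / ffact (j + 1) =
      qv ^ ((j : ℤ) + 1) * (fall m (j + 1) / ffact (j + 1)) +
        qv ^ (-(m - j)) * (fall m j / ffact j) := by
  have hsplit : qb (m + 1) =
      qv ^ ((j : ℤ) + 1) * qb (m - j) + qv ^ (-(m - j)) * qb ((j : ℤ) + 1) := by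
    rw [← qb_add]; ring_nf
  have hj : qb ((j : ℤ) + 1) ≠ 0 := qb_ne_zero (by omega)
  rw [fall_succ', add_sub_cancel_right, fall_succ, ffact_succ, hsplit]
  field_simp [ffact_ne_zero j]

theorem fall_div_ffact_mem (m : ℤ) (j : ℕ) : fall m j / ffact j ∈ LaurentZ := by
  induction j generalizing m with
  | zero => simp [fall, ffact]
  | succ j ih =>
    induction m using Int.induction_on with
    | zero => simp [fall_zero_succ]
    | succ m hm =>
      rw [fall_div_ffact_pascal]
      exact add_mem (mul_mem (qv_zpow_mem _) hm) (mul_mem (qv_zpow_mem _) (ih m))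
    | pred m hm =>
      have h := fall_div_ffact_pascal (-(m : ℤ) - 1) j
      rw [sub_add_cancel] at h
      have hq : fall (-(m : ℤ) - 1) (j + 1) / ffact (j + 1) =
          qv ^ (-((j : ℤ) + 1)) * (fall (-(m : ℤ)) (j + 1) / ffact (j + 1) -
            qv ^ (-(-(m : ℤ) - 1 - j)) * (fall (-(m : ℤ) - 1) j / ffact j)) := by
        rw [h, add_sub_cancel_right, zpow_neg, inv_mul_cancel_left₀ (zpow_ne_zero _ qv_ne_zero)]
      rw [hq]
      exact mul_mem (qv_zpow_mem _) (sub_mem hm (mul_mem (qv_zpow_mem _) (ih _)))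

lemma alpha_self_eq_fall_mul (i : ℕ) (m : ℤ) :
    ∃ G ∈ LaurentZ, alpha i m m = fall m i * G :=
  ⟨(-av) ^ (-(i : ℤ)) * qv ^ (-(i : ℤ) * (m + m) + ((i : ℤ) * ((i : ℤ) + 3)) / 2) *
      (fall m i / ffact i),
    mul_mem (mul_mem (neg_av_zpow_mem _) (qv_zpow_mem _)) (fall_div_ffact_mem m i),
    by rw [alpha]; ring⟩

lemma psum_zero {p : ℕ} (l : Fin p → ℕ) : psum l 0 = 0 := by simp [psum]

lemma psum_succ {p : ℕ} (l : Fin (p + 1) → ℕ) (i : ℕ) :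
    psum l (i + 1) = l 0 + psum (fun j => l j.succ) i := by
  simp only [psum, sum_filter, Fin.sum_univ_succ, Fin.val_zero, Fin.val_succ]
  simp

lemma prod_fall_sub_psum {p : ℕ} (l : Fin p → ℕ) (z : ℤ) :
    ∏ i : Fin p, fall (z - psum l i) (l i) = fall z (∑ i, l i) := by
  induction p generalizing z with
  | zero => simp [fall]
  | succ p ih =>
    have htail : ∀ i : Fin p, fall (z - psum l i.succ) (l i.succ) =
        fall (z - l 0 - psum (fun j => l j.succ) i) (l i.succ) := by
      intro i
      rw [Fin.val_succ, psum_succ]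
      push_cast
      ring_nf
    rw [Fin.prod_univ_succ, Fin.sum_univ_succ, prod_congr rfl fun i _ => htail i,
      ih (fun j => l j.succ), fall_add]
    simp [psum_zero]

lemma prod_alpha_psum_eq_fall_mul {p : ℕ} (l : Fin p → ℕ) (n : ℤ) :
    ∃ P ∈ LaurentZ, ∏ i : Fin p, alpha (l i) (n - psum l i) (n - psum l i) =
      fall n (∑ i, l i) * P := by
  choose G hG hGe using fun i : Fin p => alpha_self_eq_fall_mul (l i) (n - psum l i)
  refine ⟨∏ i, G i, prod_mem fun i _ => hG i, ?_⟩
  rw [prod_congr rfl fun i _ => hGe i, prod_mul_distrib, prod_fall_sub_psum]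

theorem Cnk_mem_and_divisible_general (p : ℕ) (n k : ℕ) :
    Cnk p n k ∈ LaurentZ ∧ ∃ P ∈ LaurentZ, Cnk p n k = fall (n : ℤ) k * P := by
  obtain ⟨P, hP, hC⟩ : ∃ P ∈ LaurentZ, Cnk p n k = fall n k * P := by
    refine exists_mem_sum_eq_mul _ _ _ _ fun l hl => ?_
    obtain ⟨P, hP, hprod⟩ := prod_alpha_psum_eq_fall_mul l n
    rw [Finset.Nat.mem_antidiagonalTuple.mp hl] at hprod
    rw [hprod, mul_left_comm]
    exact ⟨_, mul_mem (prod_mem fun _ _ => mul_mem (av_zpow_mem _) (qv_zpow_mem _)) hP, rfl⟩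
  exact ⟨hC ▸ mul_mem (fall_mem _ _) hP, P, hP, hC⟩

/-- For p ≥ 1 and n ≥ k ≥ 0, C^{(p)}_{n,k} lies in ℤ[q^{±1},a^{±1}]
and is divisible there by {n}_k. -/
theorem Cnk_mem_and_divisible (p : ℕ) (hp : 1 ≤ p) (n k : ℕ) (hk : k ≤ n) :
    Cnk p n k ∈ LaurentZ ∧ ∃ P ∈ LaurentZ, Cnk p n k = fall (n : ℤ) k * P :=
  Cnk_mem_and_divisible_general p n k
end
end

section
/- For all integers n ≥ 1, k ≥ 0 and all nonzero integers p and s, the element H^{(n)}_k = (−1)^k q^{2(p+s) k (n+k−1)} · C̃^{(p)}_{k,k}(q, q^n) · C̃^{(s)}_{k,k}(q, q^n) · ( {n+k−2}_k / {k}! ) is a Laurent polynomial in q with integer coefficients, i.e. lies in ℤ[q, q^{−1}]. -/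
open Finset

noncomputable section

/-- The field ℚ(q) of rational functions in one indeterminate q. -/
abbrev K : Type := RatFunc ℚ

/-- The indeterminate q. -/
def qx : K := RatFunc.X

/-- {n} = q^n - q^{-n}. -/
def qb1 (n : ℤ) : K := qx ^ n - qx ^ (-n)

/-- {n}_i = {n}{n-1}⋯{n-i+1}. -/
def fall1 (n : ℤ) (i : ℕ) : K := ∏ j ∈ range i, qb1 (n - j)

/-- {n}! = {n}_n. -/
def ffact1 (n : ℕ) : K := fall1 n n

/-- [n] = {n}/{1}. -/
def qint1 (n : ℤ) : K := qb1 n / qb1 1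

/-- [n]! = [n][n-1]⋯[1]. -/
def qfact1 (n : ℕ) : K := ∏ i ∈ range n, qint1 ((i : ℤ) + 1)

/-- The balanced Gaussian binomial [n choose i] = [n]!/([i]![n-i]!). -/
def qbinom1 (n i : ℕ) : K := qfact1 n / (qfact1 i * qfact1 (n - i))

/-- The Laurent polynomial ring ℤ[q, q⁻¹] inside ℚ(q). -/
def LaurentZ1 : Subring K := Subring.closure {qx, qx⁻¹}

/-- {n} built from a base element x in place of q. -/
def qbX (x : K) (n : ℤ) : K := x ^ n - x ^ (-n)

/-- [n] built from a base element x. -/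
def qintX (x : K) (n : ℤ) : K := qbX x n / qbX x 1

/-- [n]! built from a base element x. -/
def qfactX (x : K) (n : ℕ) : K := ∏ i ∈ range n, qintX x ((i : ℤ) + 1)

/-- The q-multinomial coefficient [n choose l] built from a base element x. -/
def qmultinomialX (x : K) {p : ℕ} (n : ℕ) (l : Fin p → ℕ) : K :=
  qfactX x n / ∏ i : Fin p, qfactX x (l i)

/-- C̃^{(p)}_{k,k}(x, x^n): the formula (17) with q replaced by the base element x
and a specialized to x^n. -/
def CtildeSpec (x : K) (p k : ℕ) (n : ℤ) : K :=
  (-1) ^ k * (x ^ n) ^ (-(k : ℤ)) * x ^ (-(2 : ℤ) * (k : ℤ) ^ 2) *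
    ∑ l ∈ Finset.Nat.antidiagonalTuple p k,
      (x ^ n) ^ (-(2 : ℤ) *
          ∑ i ∈ range (p - 1), ((p : ℤ) - ((i : ℤ) + 1)) * (lget l i : ℤ)) *
        x ^ phi k l * qmultinomialX x k l

/-- C̃^{(p)}_{k,k}(q, q^n) for p ∈ ℤ: for p ≥ 0 the formula itself; for p ≤ −1 it is
C̃^{(−p)}_{k,k}(q⁻¹, (q⁻¹)^n) = C̃^{(−p)}_{k,k}(q⁻¹, a⁻¹)|_{a = q^n}. -/
def CtildeZ (p : ℤ) (k : ℕ) (n : ℤ) : K :=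
  if 0 ≤ p then CtildeSpec qx p.natAbs k n else CtildeSpec qx⁻¹ p.natAbs k n


/-!
Each factor of `H^{(n)}_k` lies in `ℤ[q, q⁻¹]` on its own. The q-Pascal rule
`[a + b] = q^b [a] + q^{-a} [b]` makes every balanced q-multinomial coefficient a Laurent
polynomial, and `q ↦ q⁻¹` fixes `[m]`, so both specializations of `C̃` are sums of Laurent
monomials times such coefficients. Finally `{m}_k / {k}!` is a balanced q-binomial coefficient
when `m ≥ k`, vanishes when `0 ≤ m < k` (the factor `{0}` occurs), and is `(-1)^k` times the
case `m' = k - 1 - m ≥ k` when `m < 0`.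
-/

theorem qx_ne_zero : qx ≠ 0 := RatFunc.X_ne_zero

theorem intDegree_qx_zpow (m : ℤ) : (qx ^ m).intDegree = m := by
  induction m with
  | zero => simp
  | succ i ih =>
    rw [zpow_add_one₀ qx_ne_zero, RatFunc.intDegree_mul (zpow_ne_zero _ qx_ne_zero) qx_ne_zero,
      ih, qx, RatFunc.intDegree_X]
  | pred i ih =>
    rw [zpow_sub_one₀ qx_ne_zero, RatFunc.intDegree_mul (zpow_ne_zero _ qx_ne_zero)
      (inv_ne_zero qx_ne_zero), ih, RatFunc.intDegree_inv, qx, RatFunc.intDegree_X]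
    ring

theorem qb1_ne_zero {m : ℤ} (hm : m ≠ 0) : qb1 m ≠ 0 := by
  intro h
  have := congrArg RatFunc.intDegree (sub_eq_zero.mp h)
  rw [intDegree_qx_zpow, intDegree_qx_zpow] at this
  omega

theorem qb1_neg (m : ℤ) : qb1 (-m) = -qb1 m := by
  rw [qb1, qb1, neg_neg, neg_sub]

theorem qb1_eq_mul_qint1 (m : ℤ) : qb1 m = qb1 1 * qint1 m := by
  rw [qint1, mul_div_cancel₀ _ (qb1_ne_zero one_ne_zero)]

theorem qint1_add (a b : ℤ) : qint1 (a + b) = qx ^ b * qint1 a + qx ^ (-a) * qint1 b := by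
  simp only [qint1, qb1, neg_add, zpow_add₀ qx_ne_zero]
  ring

theorem qfact1_zero : qfact1 0 = 1 := prod_range_zero _

theorem qfact1_succ (n : ℕ) : qfact1 (n + 1) = qfact1 n * qint1 ((n : ℤ) + 1) :=
  prod_range_succ _ n

theorem qint1_ne_zero {m : ℤ} (hm : m ≠ 0) : qint1 m ≠ 0 :=
  div_ne_zero (qb1_ne_zero hm) (qb1_ne_zero one_ne_zero)

theorem qfact1_ne_zero (n : ℕ) : qfact1 n ≠ 0 :=
  prod_ne_zero_iff.mpr fun _ _ => qint1_ne_zero (by omega)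

theorem qintX_qx_inv (m : ℤ) : qintX qx⁻¹ m = qint1 m := by
  have h (j : ℤ) : qbX qx⁻¹ j = -qb1 j := by
    rw [qbX, qb1, inv_zpow', inv_zpow', neg_neg, neg_sub]
  rw [qintX, h, h, neg_div_neg_eq, qint1]

theorem qfactX_qx_inv : qfactX qx⁻¹ = qfact1 :=
  funext fun _ => prod_congr rfl fun _ _ => qintX_qx_inv _

theorem qx_mem : qx ∈ LaurentZ1 := Subring.subset_closure (Set.mem_insert _ _)

theorem qx_inv_mem : qx⁻¹ ∈ LaurentZ1 := Subring.subset_closure (Set.mem_insert_of_mem _ rfl)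

theorem qx_zpow_mem (m : ℤ) : qx ^ m ∈ LaurentZ1 := by
  induction m with
  | zero => rw [zpow_zero]; exact one_mem _
  | succ i ih => rw [zpow_add_one₀ qx_ne_zero]; exact mul_mem ih qx_mem
  | pred i ih => rw [zpow_sub_one₀ qx_ne_zero]; exact mul_mem ih qx_inv_mem

theorem neg_one_pow_mem (k : ℕ) : (-1 : K) ^ k ∈ LaurentZ1 := pow_mem (neg_mem (one_mem _)) k

theorem qfact1_add_div_pascal (a b : ℕ) :
    qfact1 (a + 1 + (b + 1)) / (qfact1 (a + 1) * qfact1 (b + 1)) =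
      qx ^ ((b : ℤ) + 1) * (qfact1 (a + (b + 1)) / (qfact1 a * qfact1 (b + 1))) +
        qx ^ (-((a : ℤ) + 1)) * (qfact1 (a + 1 + b) / (qfact1 (a + 1) * qfact1 b)) := by
  have hsum : ((a + (b + 1) : ℕ) : ℤ) + 1 = ((a : ℤ) + 1) + ((b : ℤ) + 1) := by
    push_cast; ring
  rw [show a + 1 + (b + 1) = a + (b + 1) + 1 by omega, show a + 1 + b = a + (b + 1) by omega,
    qfact1_succ, hsum, qint1_add, qfact1_succ a, qfact1_succ b]
  have := qint1_ne_zero (show (a : ℤ) + 1 ≠ 0 by omega)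
  have := qint1_ne_zero (show (b : ℤ) + 1 ≠ 0 by omega)
  field_simp

theorem qfact1_add_div_mem : ∀ a b : ℕ, qfact1 (a + b) / (qfact1 a * qfact1 b) ∈ LaurentZ1
  | 0, b => by rw [zero_add, qfact1_zero, one_mul, div_self (qfact1_ne_zero b)]; exact one_mem _
  | a + 1, 0 => by rw [add_zero, qfact1_zero, mul_one, div_self (qfact1_ne_zero _)]; exact one_mem _
  | a + 1, b + 1 => by
    rw [qfact1_add_div_pascal]
    exact add_mem (mul_mem (qx_zpow_mem _) (qfact1_add_div_mem a (b + 1)))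
      (mul_mem (qx_zpow_mem _) (qfact1_add_div_mem (a + 1) b))

theorem qfact1_sum_div_prod_mem {p : ℕ} (l : Fin p → ℕ) :
    qfact1 (∑ i, l i) / ∏ i, qfact1 (l i) ∈ LaurentZ1 := by
  induction p with
  | zero => rw [univ_eq_empty, sum_empty, prod_empty, div_one, qfact1_zero]; exact one_mem _
  | succ p ih =>
    have hsplit : qfact1 (∑ i, l i) / ∏ i, qfact1 (l i) =
        qfact1 (l 0 + ∑ i : Fin p, l i.succ) / (qfact1 (l 0) * qfact1 (∑ i : Fin p, l i.succ)) *
          (qfact1 (∑ i : Fin p, l i.succ) / ∏ i : Fin p, qfact1 (l i.succ)) := by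
      have := qfact1_ne_zero (∑ i : Fin p, l i.succ)
      rw [Fin.sum_univ_succ, Fin.prod_univ_succ]
      field_simp
    rw [hsplit]
    exact mul_mem (qfact1_add_div_mem _ _) (ih _)

theorem zpow_mem_of_eq_qx_or_inv {x : K} (hx : x = qx ∨ x = qx⁻¹) (m : ℤ) :
    x ^ m ∈ LaurentZ1 := by
  obtain rfl | rfl := hx
  · exact qx_zpow_mem m
  · rw [inv_zpow']; exact qx_zpow_mem (-m)

theorem qmultinomialX_mem {x : K} (hx : x = qx ∨ x = qx⁻¹) {p k : ℕ} {l : Fin p → ℕ}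
    (hl : ∑ i, l i = k) :
    qmultinomialX x k l ∈ LaurentZ1 := by
  have hfact : qfactX x = qfact1 := by
    obtain rfl | rfl := hx
    · rfl
    · exact qfactX_qx_inv
  rw [qmultinomialX, hfact, ← hl]
  exact qfact1_sum_div_prod_mem l

theorem CtildeSpec_mem {x : K} (hx : x = qx ∨ x = qx⁻¹) (p k : ℕ) (n : ℤ) :
    CtildeSpec x p k n ∈ LaurentZ1 := by
  have hpow (a b : ℤ) : (x ^ a) ^ b ∈ LaurentZ1 := by
    rw [← zpow_mul]; exact zpow_mem_of_eq_qx_or_inv hx _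
  refine mul_mem (mul_mem (mul_mem (neg_one_pow_mem k) (hpow _ _))
    (zpow_mem_of_eq_qx_or_inv hx _)) (sum_mem fun l hl => ?_)
  exact mul_mem (mul_mem (hpow _ _) (zpow_mem_of_eq_qx_or_inv hx _))
    (qmultinomialX_mem hx (Nat.mem_antidiagonalTuple.mp hl))

theorem CtildeZ_mem (p : ℤ) (k : ℕ) (n : ℤ) : CtildeZ p k n ∈ LaurentZ1 := by
  unfold CtildeZ
  split_ifs
  · exact CtildeSpec_mem (Or.inl rfl) _ k n
  · exact CtildeSpec_mem (Or.inr rfl) _ k n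

theorem fall1_succ (m : ℤ) (k : ℕ) : fall1 m (k + 1) = fall1 m k * qb1 (m - k) :=
  prod_range_succ _ k

theorem fall1_succ' (m : ℤ) (k : ℕ) : fall1 m (k + 1) = qb1 m * fall1 (m - 1) k := by
  rw [fall1, prod_range_succ', mul_comm, fall1]
  simp only [Nat.cast_add, Nat.cast_one, Nat.cast_zero, sub_zero, sub_add_eq_sub_sub_swap]

theorem fall1_natCast_add (a k : ℕ) :
    fall1 ((a + k : ℕ) : ℤ) k = qb1 1 ^ k * qfact1 (a + k) / qfact1 a := by
  induction k with
  | zero => rw [fall1, prod_range_zero, pow_zero, one_mul, add_zero, div_self (qfact1_ne_zero a)]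
  | succ k ih =>
    have hlower : ((a + (k + 1) : ℕ) : ℤ) - 1 = ((a + k : ℕ) : ℤ) := by push_cast; ring
    rw [fall1_succ', hlower, ih, ← add_assoc, qfact1_succ, qb1_eq_mul_qint1]
    push_cast
    ring

theorem ffact1_eq (k : ℕ) : ffact1 k = qb1 1 ^ k * qfact1 k := by
  have h := fall1_natCast_add 0 k
  simp only [zero_add] at h
  rw [ffact1, h, qfact1_zero, div_one]

theorem fall1_div_ffact1_mem_of_le {m : ℤ} {k : ℕ} (hkm : (k : ℤ) ≤ m) :
    fall1 m k / ffact1 k ∈ LaurentZ1 := by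
  obtain ⟨a, rfl⟩ : ∃ a : ℕ, m = ((a + k : ℕ) : ℤ) := ⟨(m - k).toNat, by omega⟩
  rw [fall1_natCast_add, ffact1_eq, div_div, mul_left_comm (qfact1 a),
    mul_div_mul_left _ _ (pow_ne_zero k (qb1_ne_zero one_ne_zero))]
  exact qfact1_add_div_mem a k

theorem fall1_eq_zero {m : ℤ} {k : ℕ} (h0 : 0 ≤ m) (hmk : m < k) : fall1 m k = 0 :=
  prod_eq_zero (mem_range.mpr (show m.toNat < k by omega))
    (by rw [Int.toNat_of_nonneg h0, sub_self, qb1, neg_zero, sub_self])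

theorem fall1_eq_neg_one_pow_mul (m : ℤ) (k : ℕ) :
    fall1 m k = (-1) ^ k * fall1 (k - 1 - m) k := by
  induction k generalizing m with
  | zero => rw [pow_zero, one_mul, fall1, fall1, prod_range_zero, prod_range_zero]
  | succ k ih =>
    have hfirst : -(m - k) = ((k + 1 : ℕ) : ℤ) - 1 - m := by push_cast; ring
    have hrest : ((k + 1 : ℕ) : ℤ) - 1 - m - 1 = k - 1 - m := by push_cast; ring
    rw [fall1_succ, ih, fall1_succ', hrest, ← neg_neg (m - k), qb1_neg, hfirst]
    ring

theorem fall1_div_ffact1_mem (m : ℤ) (k : ℕ) : fall1 m k / ffact1 k ∈ LaurentZ1 := by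
  obtain hkm | ⟨h0, hmk⟩ | hneg : (k : ℤ) ≤ m ∨ (0 ≤ m ∧ m < k) ∨ m < 0 := by omega
  · exact fall1_div_ffact1_mem_of_le hkm
  · rw [fall1_eq_zero h0 hmk, zero_div]; exact zero_mem _
  · rw [fall1_eq_neg_one_pow_mul, mul_div_assoc]
    exact mul_mem (neg_one_pow_mem k) (fall1_div_ffact1_mem_of_le (by omega))

theorem Hnk_mem_laurent_general (n : ℕ) (k : ℕ) (p s : ℤ) :
    (-1) ^ k * qx ^ (2 * (p + s) * (k : ℤ) * ((n : ℤ) + (k : ℤ) - 1)) *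
        CtildeZ p k n * CtildeZ s k n *
        (fall1 ((n : ℤ) + (k : ℤ) - 2) k / ffact1 k) ∈ LaurentZ1 :=
  mul_mem (mul_mem (mul_mem (mul_mem (neg_one_pow_mem k) (qx_zpow_mem _)) (CtildeZ_mem p k n))
    (CtildeZ_mem s k n)) (fall1_div_ffact1_mem _ k)

/-- for n ≥ 1, k ≥ 0 and nonzero integers p, s, the element
H^{(n)}_k = (−1)^k q^{2(p+s)k(n+k−1)} C̃^{(p)}_{k,k}(q,q^n) C̃^{(s)}_{k,k}(q,q^n)
({n+k−2}_k/{k}!) lies in ℤ[q,q⁻¹]. -/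
theorem Hnk_mem_laurent (n : ℕ) (hn : 1 ≤ n) (k : ℕ) (p s : ℤ)
    (hp : p ≠ 0) (hs : s ≠ 0) :
    (-1) ^ k * qx ^ (2 * (p + s) * (k : ℤ) * ((n : ℤ) + (k : ℤ) - 1)) *
        CtildeZ p k n * CtildeZ s k n *
        (fall1 ((n : ℤ) + (k : ℤ) - 2) k / ffact1 k) ∈ LaurentZ1 :=
  Hnk_mem_laurent_general n k p s
end
end
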